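/- A λ-synchronizing subshift X is synchronized irreducible if and only if its λ-synchronizing λ-graph system 𝔏^{λ(X)} is λ-irreducible. -/
import Mathlib


/-- A subshift presented by its language: nonempty, factorial, and bi-extendable. -/
structure SubshiftLang (A : Type*) where
  L : List A → Prop
  nonempty : L []
  factorial : ∀ u v w : List A, L (u ++ v ++ w) → L v
  extendable : ∀ u : List A, L u → ∃ a b : A, L (a :: (u ++ [b]))

variable {A : Type*}

/-- `v` is an `l`-synchronizing word: every length-`l` predecessor of `v`
lies in `ω⁻ₗ(v)`. -/
def SubshiftLang.Sync (X : SubshiftLang A) (l : ℕ) (v : List A) : Prop :=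
  X.L v ∧ ∀ b : List A, b.length = l → X.L (b ++ v) →
    ∀ c : List A, X.L (v ++ c) → X.L (b ++ v ++ c)

/-- `X` is λ-synchronizing: every admissible word extends on the right to a
`k`-synchronizing word, for every `k`. -/
def SubshiftLang.LambdaSync (X : SubshiftLang A) : Prop :=
  ∀ w : List A, X.L w → ∀ k : ℕ, ∃ v : List A, X.Sync k v ∧ X.L (w ++ v)

/-- `l`-past equivalence: `μ` and `ν` have the same length-`l` predecessors. -/
def SubshiftLang.PastEq (X : SubshiftLang A) (l : ℕ) (μ ν : List A) : Prop :=
  ∀ b : List A, b.length = l → (X.L (b ++ μ) ↔ X.L (b ++ ν))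

/-- X is synchronized irreducible. -/
def SubshiftLang.SyncIrr (X : SubshiftLang A) : Prop :=
  ∀ (l : ℕ) (μ ν : List A), X.Sync l μ → X.Sync l ν →
    ∃ k : ℕ, ∀ η : List A, X.Sync (l + k) η → X.PastEq l ν η →
      ∃ ξ : List A, ξ.length = k ∧ X.L (ξ ++ η) ∧ X.PastEq l (ξ ++ η) μ

/-- λ-irreducibility of the λ-synchronizing λ-graph system 𝔏^{λ(X)}, at the
level of words: for vertices [μ]ₗ, [ν]ₗ there is L such that every vertex
[η]_{l+L} lying over [ν]ₗ via ι^L is the terminal vertex of a path starting at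
[μ]ₗ. -/
def SubshiftLang.LambdaIrr (X : SubshiftLang A) : Prop :=
  ∀ (l : ℕ) (μ ν : List A), X.Sync l μ → X.Sync l ν →
    ∃ k : ℕ, ∀ η : List A, X.Sync (l + k) η → X.PastEq l η ν →
      ∃ ξ η' : List A, ξ.length = k ∧ X.Sync (l + k) η' ∧
        X.PastEq (l + k) η' η ∧ X.L (ξ ++ η') ∧ X.PastEq l (ξ ++ η') μ

lemma SubshiftLang.leftExtend (X : SubshiftLang A) (u : List A) (h : X.L u) :
    ∀ n, ∃ b : List A, b.length = n ∧ X.L (b ++ u) := by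
  intro n
  induction n with
  | zero => exact ⟨[], rfl, h⟩
  | succ n ih =>
    obtain ⟨b, hb, hL⟩ := ih
    obtain ⟨a, c, hac⟩ := X.extendable _ hL
    refine ⟨a :: b, by simp [hb], ?_⟩
    have := X.factorial [] (a :: (b ++ u)) [c] (by simpa using hac)
    simpa using this

/-- A λ-synchronizing subshift is synchronized irreducible iff 𝔏^{λ(X)} is
λ-irreducible. -/
theorem stmt19 [Fintype A] (X : SubshiftLang A) (hX : X.LambdaSync) :
    X.SyncIrr ↔ X.LambdaIrr := by
  constructor
  · intro h l μ ν hμ hν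
    obtain ⟨k, hk⟩ := h l μ ν hμ hν
    refine ⟨k, fun η hη hpe => ?_⟩
    obtain ⟨ξ, hξ, hL, hp⟩ := hk η hη (fun b hb => (hpe b hb).symm)
    exact ⟨ξ, η, hξ, hη, fun b hb => Iff.rfl, hL, hp⟩
  · intro h l μ ν hμ hν
    obtain ⟨k, hk⟩ := h l μ ν hμ hν
    refine ⟨k, fun η hη hpe => ?_⟩
    obtain ⟨ξ, η', hξ, hη', hpe', hL, hp⟩ := hk η hη (fun b hb => (hpe b hb).symm)
    obtain ⟨b, hb, hbL⟩ := X.leftExtend _ hL l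
    have hbξ : (b ++ ξ).length = l + k := by simp [hb, hξ]
    have key : ∀ d : List A, d.length = l → (X.L (d ++ (ξ ++ η)) ↔ X.L (d ++ (ξ ++ η'))) := by
      intro d hd
      have := hpe' (d ++ ξ) (by simp [hd, hξ])
      simpa [List.append_assoc] using this.symm
    have hLξη : X.L (ξ ++ η) := by
      have h1 : X.L (b ++ (ξ ++ η')) := by simpa [List.append_assoc] using hbL
      have h2 : X.L (b ++ (ξ ++ η)) := (key b hb).mpr h1
      exact X.factorial b (ξ ++ η) [] (by simpa using h2)
    refine ⟨ξ, hξ, hLξη, fun d hd => ?_⟩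
    exact (key d hd).trans (hp d hd)
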